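/- arXiv:math/0209136 — 2 statements merged into one kernel-verified Lean document; each statement's English description precedes it below -/
import Mathlib

section
/- Let b be a positive integer, R = (b, b), and let λ = (λ₁, λ₂) with b ≥ λ₁ ≥ λ₂ ≥ 0 and λ₁ + λ₂ ≥ b; set π = (2λ₁ − λ₂, λ₂, b − λ₁, b − λ₁). Then for every partition μ = (μ₁, μ₂) with b ≥ μ₁ ≥ μ₂ ≥ 0 and μ₁ + μ₂ > λ₁ + λ₂, the Littlewood–Richardson coefficient c^π_{μ, μ^c} is zero. -/
open scoped Classical

/-!  Common definitions: the ring `Λ` of symmetric functions is realized inside the ring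
`MvPowerSeries ℕ ℚ` of formal power series in countably many variables `x₀, x₁, x₂, …`
with rational coefficients; Schur functions are defined by their monomial expansion over
semistandard Young tableaux, and Littlewood–Richardson coefficients are defined as the
number of Littlewood–Richardson fillings (semistandard skew fillings whose reverse reading
word is a lattice word), which is the coefficient of `s_ν` in `s_lam ⬝ s_μ`. -/

/-- The Schur function `s_μ` of a Young diagram `μ`: the coefficient of the monomial `x^m`
is the number of semistandard Young tableaux of shape `μ` with weight `m`. -/
noncomputable def schur (μ : YoungDiagram) : MvPowerSeries ℕ ℚ :=
  fun m : ℕ →₀ ℕ =>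
    (Set.ncard {T : SemistandardYoungTableau μ |
        ∀ k : ℕ, (μ.cells.filter fun c => T c.1 c.2 = k).card = m k} : ℚ)

/-- A Littlewood–Richardson filling of the skew shape `ν/lam` with content `μ`:
a filling of the cells of `ν` not in `lam` with entries `0, 1, 2, …` that is weakly
increasing along rows, strictly increasing down columns, in which the entry `k` occurs
`μ.rowLen k` times, and such that reading right-to-left along rows, top to bottom, every
initial segment contains at least as many `k`'s as `(k+1)`'s (the lattice word condition). -/
structure LRFilling (ν lam μ : YoungDiagram) : Type where
  le : lam ≤ ν
  entry : ℕ → ℕ → ℕ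
  zeros : ∀ i j, (i, j) ∉ ν.cells \ lam.cells → entry i j = 0
  row_weak : ∀ i j, (i, j) ∈ ν.cells \ lam.cells → (i, j + 1) ∈ ν.cells \ lam.cells →
    entry i j ≤ entry i (j + 1)
  col_strict : ∀ i j, (i, j) ∈ ν.cells \ lam.cells → (i + 1, j) ∈ ν.cells \ lam.cells →
    entry i j < entry (i + 1) j
  content : ∀ k, ((ν.cells \ lam.cells).filter fun c => entry c.1 c.2 = k).card = μ.rowLen k
  lattice : ∀ i j k,
    ((ν.cells \ lam.cells).filter fun c =>
        (c.1 < i ∨ (c.1 = i ∧ j ≤ c.2)) ∧ entry c.1 c.2 = k + 1).card ≤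
    ((ν.cells \ lam.cells).filter fun c =>
        (c.1 < i ∨ (c.1 = i ∧ j ≤ c.2)) ∧ entry c.1 c.2 = k).card

/-- The Littlewood–Richardson coefficient `c^ν_{lam,μ}`, i.e. the coefficient of the
Schur function `s_ν` in the product `s_lam ⬝ s_μ`. -/
noncomputable def lrCoeff (ν lam μ : YoungDiagram) : ℕ :=
  Nat.card (LRFilling ν lam μ)

/-- The `a × b` rectangular Young diagram `R = (b^a)`. -/
def rect (a b : ℕ) : YoungDiagram :=
  ⟨Finset.range a ×ˢ Finset.range b, by
    rintro ⟨i, j⟩ ⟨i', j'⟩ ⟨hi, hj⟩ h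
    simp only [Finset.coe_product, Finset.coe_range, Set.mem_prod, Set.mem_Iio] at h ⊢
    exact ⟨lt_of_le_of_lt hi h.1, lt_of_le_of_lt hj h.2⟩⟩

/-- The complement `μᶜ` of `μ` in the `a × b` rectangle: the boxes of the rectangle
not in `μ`, rotated by 180°; its parts are `(μᶜ)ᵢ = b - μ_{a+1-i}` for `1 ≤ i ≤ a`. -/
def rectCompl (a b : ℕ) (μ : YoungDiagram) : YoungDiagram :=
  ⟨(rect a b).cells.filter fun c => (a - 1 - c.1, b - 1 - c.2) ∉ μ, by
    rintro ⟨i, j⟩ ⟨i', j'⟩ ⟨hi, hj⟩ h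
    simp only [Finset.coe_filter, Set.mem_setOf_eq] at h ⊢
    refine ⟨(rect a b).isLowerSet ⟨hi, hj⟩ h.1, fun hmem => h.2 ?_⟩
    exact μ.isLowerSet ⟨Nat.sub_le_sub_left hi _, Nat.sub_le_sub_left hj _⟩ hmem⟩

/-- Greedy `w`-decomposition piece sizes, starting from the state where `r` horizontal and
`c` vertical pieces have already been taken.  The letter `true` stands for `h` (a horizontal
piece: the rest of row `r`), `false` for `v` (a vertical piece: the rest of column `c`). -/
def wPieces : List Bool → ℕ → ℕ → YoungDiagram → List ℕ
  | [], _, _, _ => []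
  | true :: w, r, c, lam => (lam.rowLen r - c) :: wPieces w (r + 1) c lam
  | false :: w, r, c, lam => (lam.colLen c - r) :: wPieces w r (c + 1) lam

/-- The `w`-notation `lam^w` of a partition `lam`: the list of piece sizes of its greedy
`w`-decomposition. -/
def wNotation (w : List Bool) (lam : YoungDiagram) : List ℕ :=
  wPieces w 0 0 lam

/-- `lexLE l₁ l₂` : `l₁ ≤ l₂` in lexicographic order. -/
def lexLE (l₁ l₂ : List ℕ) : Prop :=
  l₁ = l₂ ∨ List.Lex (· < ·) l₁ l₂

/-- Remove the first row of a Young diagram. -/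
def stripRow (lam : YoungDiagram) : YoungDiagram :=
  ⟨(lam.cells.filter fun c => 0 < c.1).image fun c => (c.1 - 1, c.2), by
    rintro ⟨i', j'⟩ ⟨i, j⟩ ⟨hi, hj⟩ h
    simp only [Finset.coe_image, Finset.coe_filter, Set.mem_image, Set.mem_setOf_eq,
      Prod.exists] at h ⊢
    obtain ⟨x, y, ⟨hxy, hx⟩, heq⟩ := h
    obtain ⟨hx1, rfl⟩ : x - 1 = i' ∧ y = j' := by simpa [Prod.ext_iff] using heq
    exact ⟨i + 1, j, ⟨lam.isLowerSet (b := (i + 1, j)) ⟨by omega, by simpa using hj⟩ hxy,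
      by omega⟩, by simp⟩⟩

/-- Remove the first column of a Young diagram. -/
def stripCol (lam : YoungDiagram) : YoungDiagram :=
  (stripRow lam.transpose).transpose

/-- For `a`, `b` both odd, `lam` is almost self-complementary in the `a × b` rectangle if
`lam` is contained in the rectangle and the diagrams of `lam` and of its complement differ
only in which one contains the central box (row `(a+1)/2`, column `(b+1)/2`, 1-indexed). -/
def AlmostSelfCompl (a b : ℕ) (lam : YoungDiagram) : Prop :=
  lam ≤ rect a b ∧
    lam.cells \ (rectCompl a b lam).cells ∪ (rectCompl a b lam).cells \ lam.cells =
      {((a - 1) / 2, (b - 1) / 2)}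

/-- With `lam = (l₁, l₂)` and `π = (2l₁ - l₂, l₂, b - l₁, b - l₁)` as in
Statement 8, for every `μ = (m₁, m₂) ⊆ (b, b)` with `m₁ + m₂ > l₁ + l₂` we have
`c^π_{μ, μᶜ} = 0`, where `μᶜ = (b - m₂, b - m₁)`. -/
theorem statement9 (b l1 l2 m1 m2 : ℕ) (hb : 0 < b) (h1 : l1 ≤ b) (h21 : l2 ≤ l1)
    (hsum : b ≤ l1 + l2) (hm1 : m1 ≤ b) (hm21 : m2 ≤ m1) (hgt : l1 + l2 < m1 + m2) :
    lrCoeff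
      (YoungDiagram.ofRowLens [2 * l1 - l2, l2, b - l1, b - l1]
        (by simp [List.sortedGE_iff_pairwise]; omega))
      (YoungDiagram.ofRowLens [m1, m2] (by simp [List.sortedGE_iff_pairwise]; omega))
      (YoungDiagram.ofRowLens [b - m2, b - m1] (by simp [List.sortedGE_iff_pairwise]; omega)) = 0 := by
  set ν := YoungDiagram.ofRowLens [2 * l1 - l2, l2, b - l1, b - l1]
      (by simp [List.sortedGE_iff_pairwise]; omega) with hν
  set lam := YoungDiagram.ofRowLens [m1, m2] (by simp [List.sortedGE_iff_pairwise]; omega) with hlam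
  set μc := YoungDiagram.ofRowLens [b - m2, b - m1] (by simp [List.sortedGE_iff_pairwise]; omega) with hμc
  have hempty : IsEmpty (LRFilling ν lam μc) := by
    constructor
    intro F
    by_cases hc : m2 ≤ l2
    · -- main case: l1 < m1, so too many 1's are forced in row 3
      have hl1m1 : l1 < m1 := by omega
      have hrect : 0 < b - l1 := by omega
      -- rowLen facts for μc
      have hrl1 : μc.rowLen 1 = b - m1 := by
        have := YoungDiagram.rowLen_ofRowLens (w := [b - m2, b - m1])
          (hw := by simp [List.sortedGE_iff_pairwise]; omega) ⟨1, by norm_num⟩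
        simpa [hμc] using this
      have hrl_ge : ∀ e, 2 ≤ e → μc.rowLen e = 0 := by
        intro e he
        by_contra h
        have : (e, 0) ∈ μc := YoungDiagram.mem_iff_lt_rowLen.2 (Nat.pos_of_ne_zero h)
        rw [hμc, YoungDiagram.mem_ofRowLens] at this
        obtain ⟨h', _⟩ := this
        simp at h'
        omega
      -- membership of cells (2,j), (3,j) in the skew shape
      have hmem : ∀ i j, i = 2 ∨ i = 3 → j < b - l1 → (i, j) ∈ ν.cells \ lam.cells := by
        intro i j hi hj
        rw [Finset.mem_sdiff]
        constructor
        · rw [YoungDiagram.mem_cells, hν, YoungDiagram.mem_ofRowLens]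
          rcases hi with rfl | rfl
          · exact ⟨by norm_num, by simpa using hj⟩
          · exact ⟨by norm_num, by simpa using hj⟩
        · rw [YoungDiagram.mem_cells, hlam, YoungDiagram.mem_ofRowLens]
          rintro ⟨h', _⟩
          simp at h'
          omega
      -- every entry in row 3 equals 1
      have hone : ∀ j, j < b - l1 → F.entry 3 j = 1 := by
        intro j hj
        have h2 := hmem 2 j (Or.inl rfl) hj
        have h3 := hmem 3 j (Or.inr rfl) hj
        have hlt : F.entry 2 j < F.entry 3 j := F.col_strict 2 j h2 h3
        have hge : 1 ≤ F.entry 3 j := by omega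
        by_contra hne
        have he2 : 2 ≤ F.entry 3 j := by omega
        have hcont := F.content (F.entry 3 j)
        rw [hrl_ge _ he2, Finset.card_eq_zero] at hcont
        have : (3, j) ∈ (ν.cells \ lam.cells).filter
            fun c => F.entry c.1 c.2 = F.entry 3 j := by
          simp [Finset.mem_filter, h3]
        rw [hcont] at this
        simp at this
      -- but there are only b - m1 < b - l1 ones available
      have hsub : (Finset.range (b - l1)).image (fun j => ((3 : ℕ), j)) ⊆
          (ν.cells \ lam.cells).filter fun c => F.entry c.1 c.2 = 1 := by
        intro c hc'
        simp only [Finset.mem_image, Finset.mem_range] at hc'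
        obtain ⟨j, hj, rfl⟩ := hc'
        exact Finset.mem_filter.2 ⟨hmem 3 j (Or.inr rfl) hj, hone j hj⟩
      have hcard := Finset.card_le_card hsub
      rw [F.content 1, hrl1, Finset.card_image_of_injective _
        (fun a b h => by simpa using h), Finset.card_range] at hcard
      omega
    · -- containment fails: (1, l2) ∈ lam but not in ν
      have hmem : (1, l2) ∈ lam.cells := by
        rw [YoungDiagram.mem_cells, hlam, YoungDiagram.mem_ofRowLens]
        exact ⟨by norm_num, by simpa using by omega⟩
      have := YoungDiagram.cells_subset_iff.2 F.le hmem
      rw [YoungDiagram.mem_cells, hν, YoungDiagram.mem_ofRowLens] at this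
      obtain ⟨_, h'⟩ := this
      simp at h'
  simp [lrCoeff, Nat.card_of_isEmpty]
end

section
/- Let a ≥ 2 and b ≥ 1 be integers and R = (b^a). Let μ ⊆ R satisfy μ₁ = b and μ_a = 0, and let μ̄ = (μ₂, …, μ_{a−1}), a partition contained in the rectangle R̄ = (b^{a−2}). Let π be a partition with π₁ = 2b and let π̄ = (π₂, π₃, …) be π with its first row removed. Then the Littlewood–Richardson coefficient c^π_{μ, μ^c} (complement taken in R) is nonzero if and only if c^{π̄}_{μ̄, μ̄^c} (complement taken in R̄) is nonzero. -/
open scoped Classical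

section Helpers

open YoungDiagram

lemma mem_rect {a b i j : ℕ} : (i, j) ∈ rect a b ↔ i < a ∧ j < b := by
  show (i, j) ∈ (rect a b).cells ↔ _
  simp [rect]

lemma mem_rectCompl {a b : ℕ} {μ : YoungDiagram} {i j : ℕ} :
    (i, j) ∈ rectCompl a b μ ↔ i < a ∧ j < b ∧ (a - 1 - i, b - 1 - j) ∉ μ := by
  show (i, j) ∈ (rectCompl a b μ).cells ↔ _
  simp [rectCompl, rect, and_assoc]

lemma mem_stripRow {lam : YoungDiagram} {i j : ℕ} :
    (i, j) ∈ stripRow lam ↔ (i + 1, j) ∈ lam := by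
  show (i, j) ∈ (stripRow lam).cells ↔ _
  simp only [stripRow, Finset.mem_image, Finset.mem_filter, Prod.exists]
  constructor
  · rintro ⟨x, y, ⟨hxy, hx⟩, heq⟩
    obtain ⟨h1, rfl⟩ : x - 1 = i ∧ y = j := by simpa [Prod.ext_iff] using heq
    have : x = i + 1 := by omega
    subst this; exact hxy
  · intro h
    exact ⟨i + 1, j, ⟨h, by omega⟩, by simp⟩

lemma rowLen_eq_of_iff {μ ν : YoungDiagram} {i i' : ℕ}
    (h : ∀ j, (i, j) ∈ μ ↔ (i', j) ∈ ν) : μ.rowLen i = ν.rowLen i' := by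
  have h' : ∀ j, j < μ.rowLen i ↔ j < ν.rowLen i' := by
    intro j; rw [← mem_iff_lt_rowLen, ← mem_iff_lt_rowLen]; exact h j
  have h1 := (h' (μ.rowLen i)).mpr
  have h2 := (h' (ν.rowLen i')).mp
  omega

lemma rowLen_stripRow {lam : YoungDiagram} (i : ℕ) :
    (stripRow lam).rowLen i = lam.rowLen (i + 1) :=
  rowLen_eq_of_iff fun j => mem_stripRow

end Helpers

section Helpers2
open YoungDiagram

lemma rowLen_le_rect {a b : ℕ} {μ : YoungDiagram} (h : μ ≤ rect a b) (i : ℕ) :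
    μ.rowLen i ≤ b := by
  by_contra hc
  have : (i, b) ∈ μ := mem_iff_lt_rowLen.mpr (by omega)
  have := mem_rect.mp (h this)
  omega

lemma rowLen_rectCompl {a b : ℕ} {μ : YoungDiagram} (h : μ ≤ rect a b) {k : ℕ} (hk : k < a) :
    (rectCompl a b μ).rowLen k = b - μ.rowLen (a - 1 - k) := by
  have hr := rowLen_le_rect h (a - 1 - k)
  have key : ∀ j, (k, j) ∈ rectCompl a b μ ↔ j < b - μ.rowLen (a - 1 - k) := by
    intro j
    rw [mem_rectCompl]
    constructor
    · rintro ⟨-, hj, hnm⟩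
      rw [mem_iff_lt_rowLen] at hnm
      omega
    · intro hj
      refine ⟨hk, by omega, ?_⟩
      rw [mem_iff_lt_rowLen]
      omega
  have h' : ∀ j, j < (rectCompl a b μ).rowLen k ↔ j < b - μ.rowLen (a - 1 - k) :=
    fun j => (mem_iff_lt_rowLen.symm.trans (key j))
  have h1 := (h' ((rectCompl a b μ).rowLen k)).mpr
  have h2 := (h' (b - μ.rowLen (a - 1 - k))).mp
  omega

lemma rowLen_rectCompl_zero {a b : ℕ} {μ : YoungDiagram} {k : ℕ} (hk : a ≤ k) :
    (rectCompl a b μ).rowLen k = 0 := by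
  by_contra hc
  have : (k, 0) ∈ rectCompl a b μ := mem_iff_lt_rowLen.mpr (by omega)
  have := (mem_rectCompl.mp this).1
  omega

lemma stripRow_le_rect {a b : ℕ} {μ : YoungDiagram} (ha : 2 ≤ a) (hμ : μ ≤ rect a b)
    (hμa : μ.rowLen (a - 1) = 0) : stripRow μ ≤ rect (a - 2) b := by
  rintro ⟨i, j⟩ hij
  rw [mem_stripRow] at hij
  rw [mem_rect]
  have h1 := mem_rect.mp (hμ hij)
  have hne : i + 1 ≠ a - 1 := by
    intro he
    rw [mem_iff_lt_rowLen, he, hμa] at hij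
    omega
  omega

/-- content identity: `(μ̄ᶜ in (a-2)×b).rowLen k = (μᶜ in a×b).rowLen (k+1)`. -/
lemma content_identity {a b : ℕ} {μ : YoungDiagram} (ha : 2 ≤ a) (hb : 1 ≤ b)
    (hμ : μ ≤ rect a b) (hμ1 : μ.rowLen 0 = b) (hμa : μ.rowLen (a - 1) = 0) (k : ℕ) :
    (rectCompl (a - 2) b (stripRow μ)).rowLen k = (rectCompl a b μ).rowLen (k + 1) := by
  have hs := stripRow_le_rect ha hμ hμa
  rcases lt_or_ge k (a - 2) with hk | hk
  · rw [rowLen_rectCompl hs hk, rowLen_rectCompl hμ (by omega)]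
    rw [rowLen_stripRow]
    congr 2
    omega
  · rw [rowLen_rectCompl_zero hk]
    rcases eq_or_lt_of_le hk with he | hlt
    · rw [rowLen_rectCompl hμ (by omega)]
      have : a - 1 - (k + 1) = 0 := by omega
      rw [this, hμ1]
      omega
    · rw [rowLen_rectCompl_zero (by omega)]

end Helpers2

section Helpers3
open YoungDiagram

lemma LRFilling.entry_lt {ν lam μ : YoungDiagram} (T : LRFilling ν lam μ) (i j : ℕ) :
    T.entry i j < μ.colLen 0 + 1 := by
  by_cases h : (i, j) ∈ ν.cells \ lam.cells
  · have hc := T.content (T.entry i j)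
    have hmem : (i, j) ∈ (ν.cells \ lam.cells).filter
        (fun c => T.entry c.1 c.2 = T.entry i j) := by
      simp [h]
    have h1 : 0 < μ.rowLen (T.entry i j) := by
      rw [← hc]
      exact Finset.card_pos.mpr ⟨_, hmem⟩
    have h2 : (T.entry i j, 0) ∈ μ := mem_iff_lt_rowLen.mpr h1
    have := mem_iff_lt_colLen.mp h2
    omega
  · rw [T.zeros i j h]; omega

noncomputable instance instFiniteLRFilling (ν lam μ : YoungDiagram) :
    Finite (LRFilling ν lam μ) := by
  apply Finite.of_injective
    (fun T : LRFilling ν lam μ =>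
      (fun c : ↥ν.cells => (⟨T.entry c.1.1 c.1.2, T.entry_lt _ _⟩ : Fin (μ.colLen 0 + 1))))
  intro T1 T2 h
  have hent : T1.entry = T2.entry := by
    funext i j
    by_cases hc : (i, j) ∈ ν.cells
    · have := congrFun h ⟨(i, j), hc⟩
      exact congrArg Fin.val this
    · rw [T1.zeros i j (fun hm => hc (Finset.mem_sdiff.mp hm).1),
        T2.zeros i j (fun hm => hc (Finset.mem_sdiff.mp hm).1)]
  cases T1; cases T2; congr

lemma lrCoeff_ne_zero_iff {ν lam μ : YoungDiagram} :
    lrCoeff ν lam μ ≠ 0 ↔ Nonempty (LRFilling ν lam μ) := by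
  rw [lrCoeff, Nat.card_ne_zero]
  exact ⟨fun h => h.1, fun h => ⟨h, inferInstance⟩⟩

end Helpers3

section Helpers4
open YoungDiagram

variable {a b : ℕ} {μ π : YoungDiagram}

lemma mem_skew_row0 (hμ1 : μ.rowLen 0 = b) (hπ : π.rowLen 0 = 2 * b) {j : ℕ} :
    (0, j) ∈ π.cells \ μ.cells ↔ b ≤ j ∧ j < 2 * b := by
  rw [Finset.mem_sdiff, mem_cells, mem_cells, mem_iff_lt_rowLen, mem_iff_lt_rowLen,
    hμ1, hπ]
  omega

lemma mem_skew_strip {i j : ℕ} :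
    (i, j) ∈ (stripRow π).cells \ (stripRow μ).cells ↔ (i + 1, j) ∈ π.cells \ μ.cells := by
  rw [Finset.mem_sdiff, Finset.mem_sdiff, mem_cells, mem_cells, mem_cells, mem_cells,
    mem_stripRow, mem_stripRow]

lemma row0_zero (hb : 1 ≤ b) (hμ1 : μ.rowLen 0 = b) (hπ : π.rowLen 0 = 2 * b)
    {ρ : YoungDiagram} (T : LRFilling π μ ρ) {j : ℕ} (hj : (0, j) ∈ π.cells \ μ.cells) :
    T.entry 0 j = 0 := by
  have hlast : T.entry 0 (2 * b - 1) = 0 := by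
    have hmem : (0, 2 * b - 1) ∈ π.cells \ μ.cells :=
      (mem_skew_row0 hμ1 hπ).mpr (by omega)
    by_contra hne
    have hlat := T.lattice 0 (2 * b - 1) (T.entry 0 (2 * b - 1) - 1)
    have h1 : (0, 2 * b - 1) ∈ (π.cells \ μ.cells).filter fun c =>
        (c.1 < 0 ∨ (c.1 = 0 ∧ 2 * b - 1 ≤ c.2)) ∧
          T.entry c.1 c.2 = T.entry 0 (2 * b - 1) - 1 + 1 := by
      rw [Finset.mem_filter]
      refine ⟨hmem, Or.inr ⟨rfl, le_refl _⟩, ?_⟩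
      show T.entry 0 (2 * b - 1) = _
      omega
    have h2 : ((π.cells \ μ.cells).filter fun c =>
        (c.1 < 0 ∨ (c.1 = 0 ∧ 2 * b - 1 ≤ c.2)) ∧
          T.entry c.1 c.2 = T.entry 0 (2 * b - 1) - 1) = ∅ := by
      rw [Finset.eq_empty_iff_forall_notMem]
      rintro ⟨i, j'⟩ hmem'
      rw [Finset.mem_filter] at hmem'
      obtain ⟨hsk, hor, hent⟩ := hmem'
      dsimp only at hor hent
      have hi0 : i = 0 := by omega
      subst hi0
      have := (mem_skew_row0 hμ1 hπ).mp hsk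
      have hj' : j' = 2 * b - 1 := by omega
      subst hj'
      omega
    rw [h2, Finset.card_empty] at hlat
    have := Finset.card_pos.mpr ⟨_, h1⟩
    omega
  obtain ⟨hbj, hj2⟩ := (mem_skew_row0 hμ1 hπ).mp hj
  have main : ∀ d j', j' + d = 2 * b - 1 → b ≤ j' → T.entry 0 j' = 0 := by
    intro d
    induction d with
    | zero =>
      intro j' hj' hbj'
      have : j' = 2 * b - 1 := by omega
      rw [this]; exact hlast
    | succ d ih =>
      intro j' hj' hbj'
      have hm1 : (0, j') ∈ π.cells \ μ.cells := (mem_skew_row0 hμ1 hπ).mpr (by omega)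
      have hm2 : (0, j' + 1) ∈ π.cells \ μ.cells := (mem_skew_row0 hμ1 hπ).mpr (by omega)
      have h1 := T.row_weak 0 j' hm1 hm2
      have h2 := ih (j' + 1) (by omega) (by omega)
      omega
  exact main (2 * b - 1 - j) j (by omega) hbj

lemma zero_filter_eq (ha : 2 ≤ a) (hb : 1 ≤ b) (hμ : μ ≤ rect a b)
    (hμ1 : μ.rowLen 0 = b) (hμa : μ.rowLen (a - 1) = 0) (hπ : π.rowLen 0 = 2 * b)
    (T : LRFilling π μ (rectCompl a b μ)) :
    ((π.cells \ μ.cells).filter fun c => T.entry c.1 c.2 = 0) =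
      (π.cells \ μ.cells).filter fun c => c.1 = 0 := by
  have hcard : ((π.cells \ μ.cells).filter fun c => T.entry c.1 c.2 = 0).card = b := by
    rw [T.content 0, rowLen_rectCompl hμ (by omega)]
    have : a - 1 - 0 = a - 1 := by omega
    rw [this, hμa]
    omega
  have hS0 : ((π.cells \ μ.cells).filter fun c => c.1 = 0) =
      (Finset.Ico b (2 * b)).map ⟨fun j => ((0 : ℕ), j), fun x y h => by
        simpa using h⟩ := by
    ext ⟨i, j⟩
    simp only [Finset.mem_filter, Finset.mem_map, Finset.mem_Ico,
      Function.Embedding.coeFn_mk, Prod.mk.injEq]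
    constructor
    · rintro ⟨hsk, rfl⟩
      exact ⟨j, (mem_skew_row0 hμ1 hπ).mp hsk, rfl⟩
    · rintro ⟨j', hj', rfl, rfl⟩
      exact ⟨(mem_skew_row0 hμ1 hπ).mpr hj', rfl⟩
  have hsub : ((π.cells \ μ.cells).filter fun c => c.1 = 0) ⊆
      (π.cells \ μ.cells).filter fun c => T.entry c.1 c.2 = 0 := by
    rintro ⟨i, j⟩ hm
    rw [Finset.mem_filter] at hm ⊢
    obtain ⟨hsk, hi⟩ := hm
    subst hi
    exact ⟨hsk, row0_zero hb hμ1 hπ T hsk⟩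
  have hcard2 : ((π.cells \ μ.cells).filter fun c => c.1 = 0).card = b := by
    rw [hS0, Finset.card_map, Nat.card_Ico]
    omega
  exact (Finset.eq_of_subset_of_card_le hsub (by omega)).symm

lemma pos_below (ha : 2 ≤ a) (hb : 1 ≤ b) (hμ : μ ≤ rect a b)
    (hμ1 : μ.rowLen 0 = b) (hμa : μ.rowLen (a - 1) = 0) (hπ : π.rowLen 0 = 2 * b)
    (T : LRFilling π μ (rectCompl a b μ)) {i j : ℕ}
    (hij : (i, j) ∈ π.cells \ μ.cells) (hi : 0 < i) : 0 < T.entry i j := by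
  by_contra hc
  have h0 : T.entry i j = 0 := by omega
  have : (i, j) ∈ (π.cells \ μ.cells).filter fun c => T.entry c.1 c.2 = 0 :=
    Finset.mem_filter.mpr ⟨hij, h0⟩
  rw [zero_filter_eq ha hb hμ hμ1 hμa hπ T, Finset.mem_filter] at this
  omega

end Helpers4

section Helpers5
open YoungDiagram

variable {a b : ℕ} {μ π : YoungDiagram}

lemma rectCompl_le_rect {a b : ℕ} {μ : YoungDiagram} : rectCompl a b μ ≤ rect a b := by
  rintro ⟨i, j⟩ h
  rw [mem_rectCompl] at h
  rw [mem_rect]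
  exact ⟨h.1, h.2.1⟩

lemma card_row0 (hμ1 : μ.rowLen 0 = b) (hπ : π.rowLen 0 = 2 * b) :
    ((π.cells \ μ.cells).filter fun c => c.1 = 0).card = b := by
  have hS0 : ((π.cells \ μ.cells).filter fun c => c.1 = 0) =
      (Finset.Ico b (2 * b)).map ⟨fun j => ((0 : ℕ), j), fun x y h => by
        simpa using h⟩ := by
    ext ⟨i, j⟩
    simp only [Finset.mem_filter, Finset.mem_map, Finset.mem_Ico,
      Function.Embedding.coeFn_mk, Prod.mk.injEq]
    constructor
    · rintro ⟨hsk, rfl⟩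
      exact ⟨j, (mem_skew_row0 hμ1 hπ).mp hsk, rfl⟩
    · rintro ⟨j', hj', rfl, rfl⟩
      exact ⟨(mem_skew_row0 hμ1 hπ).mpr hj', rfl⟩
  rw [hS0, Finset.card_map, Nat.card_Ico]
  omega

lemma card_shift {q q' : ℕ × ℕ → Prop} [DecidablePred q] [DecidablePred q']
    (hq0 : ∀ j, (0, j) ∈ π.cells \ μ.cells → ¬ q (0, j))
    (hqq' : ∀ c, c ∈ (stripRow π).cells \ (stripRow μ).cells → (q (c.1 + 1, c.2) ↔ q' c)) :
    ((π.cells \ μ.cells).filter q).card =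
      (((stripRow π).cells \ (stripRow μ).cells).filter q').card := by
  have himg : (π.cells \ μ.cells).filter q =
      (((stripRow π).cells \ (stripRow μ).cells).filter q').image
        (fun c => (c.1 + 1, c.2)) := by
    ext ⟨i, j⟩
    simp only [Finset.mem_filter, Finset.mem_image, Prod.exists, Prod.mk.injEq]
    constructor
    · rintro ⟨hsk, hq⟩
      have hi : 0 < i := by
        by_contra hc
        have : i = 0 := by omega
        subst this
        exact hq0 j hsk hq
      refine ⟨i - 1, j, ⟨?_, ?_⟩, by omega, rfl⟩
      · rw [mem_skew_strip]
        have : i - 1 + 1 = i := by omega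
        rw [this]
        exact hsk
      · rw [← hqq' (i - 1, j)]
        · have : i - 1 + 1 = i := by omega
          simpa [this] using hq
        · rw [mem_skew_strip]
          have : i - 1 + 1 = i := by omega
          rw [this]
          exact hsk
    · rintro ⟨x, y, ⟨hx, hqx⟩, rfl, rfl⟩
      exact ⟨mem_skew_strip.mp hx, (hqq' (x, y) hx).mpr hqx⟩
  rw [himg, Finset.card_image_of_injective]
  rintro ⟨x, y⟩ ⟨x', y'⟩ h
  simp only [Prod.mk.injEq] at h
  exact Prod.ext (by omega) h.2

end Helpers5

section Forward
open YoungDiagram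

variable {a b : ℕ} {μ π : YoungDiagram}

lemma forward_dir (ha : 2 ≤ a) (hb : 1 ≤ b) (hμ : μ ≤ rect a b)
    (hμ1 : μ.rowLen 0 = b) (hμa : μ.rowLen (a - 1) = 0) (hπ : π.rowLen 0 = 2 * b)
    (T : LRFilling π μ (rectCompl a b μ)) :
    Nonempty (LRFilling (stripRow π) (stripRow μ) (rectCompl (a - 2) b (stripRow μ))) := by
  set E : ℕ → ℕ → ℕ := fun i j =>
    if (i, j) ∈ (stripRow π).cells \ (stripRow μ).cells then T.entry (i + 1) j - 1 else 0
    with hE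
  -- entry relation on skew cells
  have hrel : ∀ i j, (i, j) ∈ (stripRow π).cells \ (stripRow μ).cells →
      ∀ m, (E i j = m ↔ T.entry (i + 1) j = m + 1) := by
    intro i j hij m
    have hpos : 0 < T.entry (i + 1) j :=
      pos_below ha hb hμ hμ1 hμa hπ T (mem_skew_strip.mp hij) (by omega)
    rw [hE]
    simp only [if_pos hij]
    omega
  refine ⟨⟨?_, E, ?_, ?_, ?_, ?_, ?_⟩⟩
  · -- le
    rintro ⟨i, j⟩ h
    rw [mem_stripRow] at h ⊢
    exact T.le h
  · -- zeros
    intro i j h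
    simp only [hE, if_neg h]
  · -- row_weak
    intro i j h1 h2
    have e1 : E i j = T.entry (i + 1) j - 1 := by simp only [hE, if_pos h1]
    have e2 : E i (j + 1) = T.entry (i + 1) (j + 1) - 1 := by simp only [hE, if_pos h2]
    have := T.row_weak (i + 1) j (mem_skew_strip.mp h1) (mem_skew_strip.mp h2)
    omega
  · -- col_strict
    intro i j h1 h2
    have e1 : E i j = T.entry (i + 1) j - 1 := by simp only [hE, if_pos h1]
    have e2 : E (i + 1) j = T.entry (i + 1 + 1) j - 1 := by simp only [hE, if_pos h2]
    have hpos : 0 < T.entry (i + 1) j :=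
      pos_below ha hb hμ hμ1 hμa hπ T (mem_skew_strip.mp h1) (by omega)
    have := T.col_strict (i + 1) j (mem_skew_strip.mp h1) (mem_skew_strip.mp h2)
    omega
  · -- content
    intro k
    rw [content_identity ha hb hμ hμ1 hμa k, ← T.content (k + 1)]
    refine (card_shift (q := fun c => T.entry c.1 c.2 = k + 1) ?_ ?_).symm
    · intro j hj hq
      dsimp only at hq
      rw [row0_zero hb hμ1 hπ T hj] at hq
      omega
    · intro c hc
      dsimp only
      exact (hrel c.1 c.2 hc k).symm
  · -- lattice
    intro i j k
    have key : ∀ m : ℕ,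
        (((stripRow π).cells \ (stripRow μ).cells).filter fun c =>
          (c.1 < i ∨ (c.1 = i ∧ j ≤ c.2)) ∧ E c.1 c.2 = m).card =
        ((π.cells \ μ.cells).filter fun c =>
          (c.1 < i + 1 ∨ (c.1 = i + 1 ∧ j ≤ c.2)) ∧ T.entry c.1 c.2 = m + 1).card := by
      intro m
      refine (card_shift
        (q := fun c => (c.1 < i + 1 ∨ (c.1 = i + 1 ∧ j ≤ c.2)) ∧ T.entry c.1 c.2 = m + 1)
        ?_ ?_).symm
      · intro j' hj' hq
        dsimp only at hq
        rw [row0_zero hb hμ1 hπ T hj'] at hq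
        omega
      · intro c hc
        dsimp only
        rw [hrel c.1 c.2 hc m]
        constructor
        · rintro ⟨hpre, hent⟩
          exact ⟨by omega, hent⟩
        · rintro ⟨hpre, hent⟩
          exact ⟨by omega, hent⟩
    rw [key (k + 1), key k]
    exact T.lattice (i + 1) j (k + 1)

end Forward

section Reverse
open YoungDiagram

variable {a b : ℕ} {μ π : YoungDiagram}

lemma reverse_dir (ha : 2 ≤ a) (hb : 1 ≤ b) (hμ : μ ≤ rect a b)
    (hμ1 : μ.rowLen 0 = b) (hμa : μ.rowLen (a - 1) = 0) (hπ : π.rowLen 0 = 2 * b)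
    (T : LRFilling (stripRow π) (stripRow μ) (rectCompl (a - 2) b (stripRow μ))) :
    Nonempty (LRFilling π μ (rectCompl a b μ)) := by
  set E : ℕ → ℕ → ℕ := fun i j =>
    if (i, j) ∈ π.cells \ μ.cells ∧ 0 < i then T.entry (i - 1) j + 1 else 0
    with hE
  have hrow0 : ∀ j, E 0 j = 0 := by
    intro j
    simp only [hE]
    rw [if_neg (by omega)]
  have hups : ∀ i j, (i + 1, j) ∈ π.cells \ μ.cells →
      E (i + 1) j = T.entry i j + 1 := by
    intro i j h
    simp only [hE]
    rw [if_pos ⟨h, by omega⟩]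
    rfl
  -- zero cells are exactly the row-0 skew cells
  have hzero_iff : ∀ c, c ∈ π.cells \ μ.cells → (E c.1 c.2 = 0 ↔ c.1 = 0) := by
    rintro ⟨i, j⟩ hc
    match i with
    | 0 => simp [hrow0]
    | i + 1 =>
      rw [hups i j hc]
      simp
  refine ⟨⟨?_, E, ?_, ?_, ?_, ?_, ?_⟩⟩
  · -- le : μ ≤ π
    rintro ⟨i, j⟩ h
    match i with
    | 0 =>
      rw [mem_iff_lt_rowLen, hμ1] at h
      rw [mem_iff_lt_rowLen, hπ]
      omega
    | i + 1 =>
      have : (i, j) ∈ stripRow μ := mem_stripRow.mpr h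
      have := T.le this
      simp only [YoungDiagram.mem_cells, mem_stripRow] at this
      exact this
  · -- zeros
    intro i j h
    simp only [hE]
    rw [if_neg (by tauto)]
  · -- row_weak
    intro i j h1 h2
    match i with
    | 0 => rw [hrow0, hrow0]
    | i + 1 =>
      rw [hups i j h1, hups i (j + 1) h2]
      have := T.row_weak i j (mem_skew_strip.mpr h1) (mem_skew_strip.mpr h2)
      omega
  · -- col_strict
    intro i j h1 h2
    match i with
    | 0 =>
      rw [hrow0, hups 0 j h2]
      omega
    | i + 1 =>
      rw [hups i j h1, hups (i + 1) j h2]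
      have := T.col_strict i j (mem_skew_strip.mpr h1) (mem_skew_strip.mpr h2)
      omega
  · -- content
    intro k
    match k with
    | 0 =>
      have hfe : ((π.cells \ μ.cells).filter fun c => E c.1 c.2 = 0) =
          (π.cells \ μ.cells).filter fun c => c.1 = 0 := by
        apply Finset.filter_congr
        intro c hc
        exact hzero_iff c hc
      rw [hfe, card_row0 hμ1 hπ, rowLen_rectCompl hμ (by omega)]
      have h1 : a - 1 - 0 = a - 1 := by omega
      rw [h1, hμa]
      omega
    | k + 1 =>
      rw [← content_identity ha hb hμ hμ1 hμa k, ← T.content k]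
      refine card_shift (q := fun c => E c.1 c.2 = k + 1) ?_ ?_
      · intro j hj hq
        dsimp only at hq
        rw [hrow0] at hq
        omega
      · intro c hc
        dsimp only
        rw [hups c.1 c.2 (mem_skew_strip.mp hc)]
        omega
  · -- lattice
    intro i j k
    match i with
    | 0 =>
      have hempty : ((π.cells \ μ.cells).filter fun c =>
          (c.1 < 0 ∨ (c.1 = 0 ∧ j ≤ c.2)) ∧ E c.1 c.2 = k + 1) = ∅ := by
        rw [Finset.eq_empty_iff_forall_notMem]
        rintro ⟨i', j'⟩ hm
        rw [Finset.mem_filter] at hm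
        obtain ⟨hsk, hor, hent⟩ := hm
        dsimp only at hor hent
        have hi0 : i' = 0 := by omega
        subst hi0
        rw [hrow0] at hent
        omega
      rw [hempty]
      simp
    | i + 1 =>
      match k with
      | 0 =>
        -- #(=1 in prefix) ≤ total #1 = rowLen 1 of compl ≤ b = #(=0 in prefix)
        have hle1 : ((π.cells \ μ.cells).filter fun c =>
            (c.1 < i + 1 ∨ (c.1 = i + 1 ∧ j ≤ c.2)) ∧ E c.1 c.2 = 0 + 1).card ≤
            ((π.cells \ μ.cells).filter fun c => E c.1 c.2 = 1).card := by
          apply Finset.card_le_card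
          intro c hc
          rw [Finset.mem_filter] at hc ⊢
          exact ⟨hc.1, hc.2.2⟩
        have htot : ((π.cells \ μ.cells).filter fun c => E c.1 c.2 = 1).card ≤ b := by
          have heq : ((π.cells \ μ.cells).filter fun c => E c.1 c.2 = 1).card =
              (rectCompl a b μ).rowLen 1 := by
            rw [← content_identity ha hb hμ hμ1 hμa 0, ← T.content 0]
            refine card_shift (q := fun c => E c.1 c.2 = 1) ?_ ?_
            · intro j' hj' hq
              dsimp only at hq
              rw [hrow0] at hq
              omega
            · intro c hc
              dsimp only
              rw [hups c.1 c.2 (mem_skew_strip.mp hc)]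
              omega
          rw [heq, rowLen_rectCompl hμ (by omega)]
          omega
        have heq0 : ((π.cells \ μ.cells).filter fun c =>
            (c.1 < i + 1 ∨ (c.1 = i + 1 ∧ j ≤ c.2)) ∧ E c.1 c.2 = 0) =
            (π.cells \ μ.cells).filter fun c => c.1 = 0 := by
          apply Finset.filter_congr
          intro c hc
          constructor
          · rintro ⟨-, h0⟩
            exact (hzero_iff c hc).mp h0
          · intro h0
            exact ⟨Or.inl (by omega), (hzero_iff c hc).mpr h0⟩
        rw [heq0, card_row0 hμ1 hπ]
        omega
      | k + 1 =>
        have key : ∀ m : ℕ, ((π.cells \ μ.cells).filter fun c =>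
            (c.1 < i + 1 ∨ (c.1 = i + 1 ∧ j ≤ c.2)) ∧ E c.1 c.2 = m + 1).card =
            (((stripRow π).cells \ (stripRow μ).cells).filter fun c =>
            (c.1 < i ∨ (c.1 = i ∧ j ≤ c.2)) ∧ T.entry c.1 c.2 = m).card := by
          intro m
          apply card_shift
          · intro j' hj' hq
            dsimp only at hq
            rw [hrow0] at hq
            omega
          · intro c hc
            dsimp only
            rw [hups c.1 c.2 (mem_skew_strip.mp hc)]
            constructor
            · rintro ⟨hpre, hent⟩
              exact ⟨by omega, by omega⟩
            · rintro ⟨hpre, hent⟩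
              exact ⟨by omega, by omega⟩
        rw [key (k + 1), key k]
        exact T.lattice i j k

end Reverse

/-- Let `a ≥ 2`, `b ≥ 1`, `R = (b^a)`, and let `μ ⊆ R` with `μ₁ = b` and
`μ_a = 0`; let `μ̄ = (μ₂, …, μ_{a-1})` (strip the first row) in the rectangle `(b^{a-2})`.
For a partition `π` with `π₁ = 2b` and `π̄` obtained from `π` by removing its first row,
`c^π_{μ, μᶜ} ≠ 0` (complement in `R`) iff `c^{π̄}_{μ̄, μ̄ᶜ} ≠ 0` (complement in
`(b^{a-2})`). -/
theorem statement11 (a b : ℕ) (ha : 2 ≤ a) (hb : 1 ≤ b) (μ π : YoungDiagram)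
    (hμ : μ ≤ rect a b) (hμ1 : μ.rowLen 0 = b) (hμa : μ.rowLen (a - 1) = 0)
    (hπ : π.rowLen 0 = 2 * b) :
    lrCoeff π μ (rectCompl a b μ) ≠ 0 ↔
      lrCoeff (stripRow π) (stripRow μ) (rectCompl (a - 2) b (stripRow μ)) ≠ 0 := by
  rw [lrCoeff_ne_zero_iff, lrCoeff_ne_zero_iff]
  exact ⟨fun h => h.elim fun T => forward_dir ha hb hμ hμ1 hμa hπ T,
    fun h => h.elim fun T => reverse_dir ha hb hμ hμ1 hμa hπ T⟩
end
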